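/- Let G = (V, E) be a finite directed acyclic graph whose vertex set V is contained in the ground set of a matroid M. Suppose that every non-sink vertex u of G is spanned in M by its out-neighborhood δ⁺(u). Then for every set S ⊆ V that is independent in M there exists an injective function ψ : S → {sinks of G} such that, for every u ∈ S, ψ(u) is a sink of G reachable from u by a directed path (every vertex is reachable from itself). -/

import Mathlib

open Finset

attribute [local instance] Classical.propDecidable

universe u

/-- A matroid on a ground set `α`, given as a nonempty, downward closed family of
finite independent sets satisfying the augmentation property. -/
structure MatroidOn (α : Type u) where
  Indep : Finset α → Prop
  nonempty : ∃ A, Indep A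
  subset_indep : ∀ ⦃A B : Finset α⦄, A ⊆ B → Indep B → Indep A
  augment : ∀ ⦃A B : Finset α⦄, Indep A → Indep B → A.card < B.card →
    ∃ e ∈ B, e ∉ A ∧ Indep (insert e A)

/-- Submodularity of a set function. -/
def SubmodularFn {α : Type u} [DecidableEq α] (f : Finset α → ℝ) : Prop :=
  ∀ X Y : Finset α, X ⊆ Y → ∀ e, e ∉ Y →
    f (insert e Y) - f Y ≤ f (insert e X) - f X

/-- Monotonicity of a set function. -/
def MonotoneFn {α : Type u} (f : Finset α → ℝ) : Prop :=
  ∀ X Y : Finset α, X ⊆ Y → f X ≤ f Y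

variable {α : Type u} [DecidableEq α]

/-- The marginal gain `f(e | T) = f (T ∪ {e}) - f T`. -/
def marg (f : Finset α → ℝ) (T : Finset α) (e : α) : ℝ := f (insert e T) - f T

/-- The rank of a finite set `D` in the matroid `M`: the largest cardinality of an
independent subset of `D`. -/
noncomputable def MatroidOn.rk (M : MatroidOn α) (D : Finset α) : ℕ :=
  sSup {m | ∃ I : Finset α, I ⊆ D ∧ M.Indep I ∧ I.card = m}

/-- `x` is spanned by `D` in `M`: the rank of `D ∪ {x}` equals the rank of `D`. -/
def MatroidOn.Spanned (M : MatroidOn α) (x : α) (D : Finset α) : Prop :=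
  M.rk (insert x D) = M.rk D

/-!
If some `u ∈ S` is not a sink, then `u` is spanned by `δ⁺(u)`, hence by `(S - u) ∪ δ⁺(u)`, so
this set has rank at least `|S|` and `S - u` can be augmented by some out-neighbour `e` of `u`.
The new independent set `S - u + e` reaches strictly fewer vertices in total (by acyclicity `e`
does not reach `u`), so by induction it has an injective map `ψ` to reachable sinks, and
`ψ ∘ swap u e` serves for `S`. When every element of `S` is a sink, the identity serves.
-/

namespace MatroidOn

variable (M : MatroidOn α)

omit [DecidableEq α] in
theorem indep_empty : M.Indep ∅ :=
  let ⟨A, hA⟩ := M.nonempty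
  M.subset_indep (empty_subset A) hA

-- `augment` is stated with the classical `DecidableEq` instance; this uses the ambient one.
theorem exists_insert_of_card_lt {A B : Finset α} (hA : M.Indep A) (hB : M.Indep B)
    (hAB : #A < #B) : ∃ e ∈ B, e ∉ A ∧ M.Indep (insert e A) := by
  convert M.augment hA hB hAB

omit [DecidableEq α] in
theorem bddAbove_card_indep_subset (D : Finset α) :
    BddAbove {m | ∃ I ⊆ D, M.Indep I ∧ #I = m} :=
  ⟨#D, fun _ ⟨_, hID, _, hI⟩ => hI ▸ card_le_card hID⟩

omit [DecidableEq α] in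
theorem card_le_rk {I D : Finset α} (hID : I ⊆ D) (hI : M.Indep I) : #I ≤ M.rk D :=
  le_csSup (M.bddAbove_card_indep_subset D) ⟨I, hID, hI, rfl⟩

omit [DecidableEq α] in
theorem exists_indep_card_eq_rk (D : Finset α) : ∃ I ⊆ D, M.Indep I ∧ #I = M.rk D :=
  Nat.sSup_mem (s := {m | ∃ I ⊆ D, M.Indep I ∧ #I = m}) ⟨0, ∅, empty_subset D, M.indep_empty, rfl⟩
    (M.bddAbove_card_indep_subset D)

omit [DecidableEq α] in
theorem rk_mono {X Y : Finset α} (h : X ⊆ Y) : M.rk X ≤ M.rk Y :=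
  let ⟨_, hIX, hI, hIc⟩ := M.exists_indep_card_eq_rk X
  hIc ▸ M.card_le_rk (hIX.trans h) hI

theorem exists_indep_superset_card_eq_rk {J D : Finset α} (hJD : J ⊆ D) (hJ : M.Indep J) :
    ∃ I, J ⊆ I ∧ I ⊆ D ∧ M.Indep I ∧ #I = M.rk D := by
  obtain ⟨I, hI, hmax⟩ := exists_max_image ({I ∈ D.powerset | J ⊆ I ∧ M.Indep I}) card
    ⟨J, by simp [hJD, hJ]⟩
  simp only [mem_filter, mem_powerset] at hI
  obtain ⟨hID, hJI, hIind⟩ := hI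
  refine ⟨I, hJI, hID, hIind, le_antisymm (M.card_le_rk hID hIind) ?_⟩
  by_contra! hlt
  obtain ⟨B, hBD, hB, hBc⟩ := M.exists_indep_card_eq_rk D
  obtain ⟨e, heB, heI, hind⟩ := M.exists_insert_of_card_lt hIind hB (hBc ▸ hlt)
  have := hmax (insert e I)
    (by simp [insert_subset (hBD heB) hID, hJI.trans (subset_insert e I), hind])
  rw [card_insert_of_notMem heI] at this
  omega

variable {M}

theorem Spanned.mono {x : α} {D X : Finset α} (h : M.Spanned x D) (hDX : D ⊆ X) :
    M.Spanned x X := by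
  unfold Spanned at h ⊢
  refine le_antisymm ?_ (M.rk_mono (subset_insert x X))
  obtain ⟨J, hJD, hJ, hJc⟩ := M.exists_indep_card_eq_rk D
  obtain ⟨I, hJI, hIX, hI, hIc⟩ := M.exists_indep_superset_card_eq_rk (hJD.trans hDX) hJ
  obtain ⟨K, hKX, hK, hKc⟩ := M.exists_indep_card_eq_rk (insert x X)
  by_contra! hlt
  obtain ⟨e, heK, heI, hind⟩ := M.exists_insert_of_card_lt hI hK (by omega)
  rcases mem_insert.1 (hKX heK) with rfl | heX
  · -- `J + e` is independent in `insert e D`, contradicting `rk (insert e D) = rk D = #J`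
    have hJe := M.card_le_rk (insert_subset_insert e hJD)
      (M.subset_indep (insert_subset_insert e hJI) hind)
    rw [card_insert_of_notMem fun h => heI (hJI h), h] at hJe
    omega
  · have hIe := M.card_le_rk (insert_subset heX hIX) hind
    rw [card_insert_of_notMem heI] at hIe
    omega

theorem exists_exchange_of_spanned {S D : Finset α} {u : α} (hS : M.Indep S) (hu : u ∈ S)
    (hspan : M.Spanned u D) : ∃ e ∈ D, e ∉ S.erase u ∧ M.Indep (insert e (S.erase u)) := by
  have hX : M.Spanned u (S.erase u ∪ D) := hspan.mono subset_union_right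
  obtain ⟨B, hBX, hB, hBc⟩ := M.exists_indep_card_eq_rk (S.erase u ∪ D)
  have hSB : #S ≤ #B := calc
    #S ≤ M.rk (insert u (S.erase u ∪ D)) := M.card_le_rk
      ((insert_erase hu).symm.subset.trans (insert_subset_insert u subset_union_left)) hS
    _ = #B := by rw [hX, hBc]
  obtain ⟨e, heB, heS, hind⟩ :=
    M.exists_insert_of_card_lt (M.subset_indep (erase_subset u S) hS) hB
      ((card_erase_lt_of_mem hu).trans_le hSB)
  exact ⟨e, (mem_union.1 (hBX heB)).resolve_left heS, heS, hind⟩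

end MatroidOn

namespace Finset

theorem sum_insert_erase_lt {β : Type*} [AddCommMonoid β] [PartialOrder β]
    [IsOrderedCancelAddMonoid β] {S : Finset α} {u e : α} {f : α → β} (hu : u ∈ S)
    (he : e ∉ S.erase u) (hf : f e < f u) : ∑ s ∈ insert e (S.erase u), f s < ∑ s ∈ S, f s := by
  rw [sum_insert he, ← add_sum_erase S f hu]
  exact add_lt_add_left hf _

omit [DecidableEq α] in
theorem filter_reflTransGen_ssubset {V : Finset α} {E : α → α → Prop} {u e : α}
    (hacyclic : ∀ v, ¬ Relation.TransGen E v v) (hu : u ∈ V) (hue : E u e) :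
    {w ∈ V | Relation.ReflTransGen E e w} ⊂ {w ∈ V | Relation.ReflTransGen E u w} := by
  refine ssubset_iff_of_subset (fun w hw => ?_) |>.2 ⟨u, ?_, fun hu' => ?_⟩
  · rw [mem_filter] at hw ⊢
    exact ⟨hw.1, .head hue hw.2⟩
  · exact mem_filter.2 ⟨hu, .refl⟩
  · exact hacyclic u (.head' hue (mem_filter.1 hu').2)

end Finset

def IsSinkMap (V : Finset α) (E : α → α → Prop) (S : Finset α) (ψ : α → α) : Prop :=
  Set.InjOn ψ S ∧ ∀ u ∈ S, ψ u ∈ V ∧ (∀ v, ¬ E (ψ u) v) ∧ Relation.ReflTransGen E u (ψ u)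

namespace IsSinkMap

variable {V S : Finset α} {E : α → α → Prop}

omit [DecidableEq α] in
theorem id (hSV : S ⊆ V) (hsink : ∀ u ∈ S, ∀ v, ¬ E u v) : IsSinkMap V E S id :=
  ⟨Set.injOn_id _, fun u hu => ⟨hSV hu, hsink u hu, .refl⟩⟩

omit [DecidableEq α] in
theorem comp {T : Finset α} {ψ σ : α → α} (hψ : IsSinkMap V E T ψ) (hσ : Set.InjOn σ S)
    (hST : Set.MapsTo σ S T) (hreach : ∀ w ∈ S, Relation.ReflTransGen E w (σ w)) :
    IsSinkMap V E S (ψ ∘ σ) :=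
  ⟨hψ.1.comp hσ hST, fun w hw =>
    let ⟨hV, hsink, hwσ⟩ := hψ.2 _ (hST hw)
    ⟨hV, hsink, (hreach w hw).trans hwσ⟩⟩

theorem of_exchange {u e : α} {ψ : α → α} (hψ : IsSinkMap V E (insert e (S.erase u)) ψ)
    (he : e ∉ S.erase u) (hue : E u e) : IsSinkMap V E S (ψ ∘ Equiv.swap u e) := by
  have hfix : ∀ w ∈ S, w ≠ u → Equiv.swap u e w = w := fun w hw hwu =>
    Equiv.swap_apply_of_ne_of_ne hwu fun hwe => he (hwe ▸ mem_erase.2 ⟨hwu, hw⟩)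
  refine hψ.comp (Equiv.swap u e).injective.injOn (fun w hw => ?_) (fun w hw => ?_) <;>
    obtain rfl | hwu := eq_or_ne w u
  · simp
  · rw [hfix w hw hwu]
    exact mem_insert_of_mem (mem_erase.2 ⟨hwu, hw⟩)
  · rw [Equiv.swap_apply_left]
    exact .single hue
  · rw [hfix w hw hwu]

end IsSinkMap

theorem dag_matroid_injective_map_to_sinks
    (M : MatroidOn α) (V : Finset α) (E : α → α → Prop)
    (hacyclic : ∀ v, ¬ Relation.TransGen E v v)
    (hspan : ∀ u ∈ V, (∃ v, E u v) → M.Spanned u (V.filter fun v => E u v))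
    (S : Finset α) (hSV : S ⊆ V) (hS : M.Indep S) :
    ∃ ψ : α → α, Set.InjOn ψ ↑S ∧
      ∀ u ∈ S, ψ u ∈ V ∧ (∀ v, ¬ E (ψ u) v) ∧ Relation.ReflTransGen E u (ψ u) := by
  suffices h : ∀ n, ∀ S ⊆ V, M.Indep S →
      ∑ s ∈ S, #{w ∈ V | Relation.ReflTransGen E s w} = n → ∃ ψ, IsSinkMap V E S ψ from
    h _ S hSV hS rfl
  intro n
  induction n using Nat.strong_induction_on with
  | _ n ih =>
  rintro S hSV hS rfl
  by_cases hsink : ∀ u ∈ S, ∀ v, ¬ E u v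
  · exact ⟨id, .id hSV hsink⟩
  push Not at hsink
  obtain ⟨u, huS, v, huv⟩ := hsink
  obtain ⟨e, heD, heS, hind⟩ := M.exists_exchange_of_spanned hS huS (hspan u (hSV huS) ⟨v, huv⟩)
  obtain ⟨heV, hue⟩ := mem_filter.1 heD
  have hreach := card_lt_card (filter_reflTransGen_ssubset hacyclic (hSV huS) hue)
  obtain ⟨ψ, hψ⟩ := ih _ (sum_insert_erase_lt huS heS hreach)
    _ (insert_subset heV ((erase_subset u S).trans hSV)) hind rfl
  exact ⟨_, hψ.of_exchange heS hue⟩
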